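/- Let θ ∈ (π/2, π), β ∈ (0,1), and b > 0. There exists a constant C > 0 such that for all t > 0: 2·∫_{1/t}^∞ min{1, ρ^{−β}/b} · e^{t ρ cos θ} dρ + t^{−1} · min{1, t^{β}/b} · ∫_{−θ}^{θ} e^{cos ψ} dψ ≤ C · min{t^{−1}, t^{β−1}}. -/
import Mathlib

open MeasureTheory intervalIntegral

/-- Contour estimate for the inhomogeneous error kernel (Section 3.2,
Theorem 3.5): the arclength integral over `Γ_{θ,1/t}` of
`min{1, |z|^{-β}/b} e^{t Re z}`, written out over the two rays and the arc,
is bounded by `C min{t⁻¹, t^{β-1}}`. -/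
theorem contour_integral_min_bound (θ β b : ℝ)
    (hθ : Real.pi / 2 < θ) (hθπ : θ < Real.pi)
    (hβ : β ∈ Set.Ioo (0 : ℝ) 1) (hb : 0 < b) :
    ∃ C > 0, ∀ t > (0 : ℝ),
      2 * (∫ ρ in Set.Ioi (1 / t), min 1 (ρ ^ (-β) / b) * Real.exp (t * ρ * Real.cos θ)) +
          t⁻¹ * min 1 (t ^ β / b) * ∫ ψ in (-θ)..θ, Real.exp (Real.cos ψ) ≤
        C * min t⁻¹ (t ^ (β - 1)) := by
  obtain ⟨hβ0, hβ1⟩ := hβ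
  have hcos : Real.cos θ < 0 :=
    Real.cos_neg_of_pi_div_two_lt_of_lt hθ (by linarith [Real.pi_pos])
  set c : ℝ := -Real.cos θ with hcdef
  have hc0 : 0 < c := by simp [hcdef]; linarith
  set K : ℝ := ∫ ψ in (-θ)..θ, Real.exp (Real.cos ψ) with hKdef
  have hK0 : 0 ≤ K :=
    intervalIntegral.integral_nonneg (by linarith [Real.pi_pos]) fun x _ => (Real.exp_pos _).le
  refine ⟨max 1 b⁻¹ * (2 / c + K), ?_, fun t ht => ?_⟩
  · have h1 : (0:ℝ) < 2 / c := by positivity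
    have h2 : (0:ℝ) < max 1 b⁻¹ := lt_of_lt_of_le one_pos (le_max_left _ _)
    nlinarith
  have h1t : (0:ℝ) < 1 / t := by positivity
  have hm0 : 0 ≤ min 1 (t ^ β / b) := le_min zero_le_one (by positivity)
  set m : ℝ := min 1 (t ^ β / b) with hmdef
  -- dominating function
  set g : ℝ → ℝ := fun ρ => m * Real.exp (-(c * t) * ρ) with hgdef
  have hct : 0 < c * t := mul_pos hc0 ht
  have hgint : IntegrableOn g (Set.Ioi (1 / t)) :=
    (exp_neg_integrableOn_Ioi (1 / t) hct).const_mul m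
  -- pointwise bound
  have hpt : ∀ ρ ∈ Set.Ioi (1 / t),
      min 1 (ρ ^ (-β) / b) * Real.exp (t * ρ * Real.cos θ) ≤ g ρ := by
    intro ρ hρ
    have hρ0 : 0 < ρ := lt_trans h1t hρ
    have hexp : Real.exp (t * ρ * Real.cos θ) = Real.exp (-(c * t) * ρ) := by
      congr 1; simp [hcdef]; ring
    have hrb : ρ ^ (-β) ≤ t ^ β := by
      have h1 : ρ ^ (-β) ≤ (1 / t) ^ (-β) :=
        Real.rpow_le_rpow_of_nonpos h1t (le_of_lt hρ) (by linarith)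
      have h2 : (1 / t) ^ (-β) = t ^ β := by
        rw [one_div, ← Real.rpow_neg_one t, ← Real.rpow_mul ht.le]
        norm_num
      linarith [h2 ▸ h1]
    have hmin : min 1 (ρ ^ (-β) / b) ≤ m := by
      exact min_le_min le_rfl (by gcongr)
    rw [hexp, hgdef]
    exact mul_le_mul_of_nonneg_right hmin (Real.exp_pos _).le
  -- measurability & integrability of f
  have hmeas : ContinuousOn (fun ρ : ℝ =>
      min 1 (ρ ^ (-β) / b) * Real.exp (t * ρ * Real.cos θ)) (Set.Ioi (1 / t)) := by
    apply ContinuousOn.mul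
    · exact ContinuousOn.inf continuousOn_const ((ContinuousOn.rpow_const continuousOn_id
        (fun x hx => Or.inl (ne_of_gt (lt_trans h1t hx)))).div_const b)
    · exact (Real.continuous_exp.comp ((continuous_const.mul continuous_id).mul
        continuous_const)).continuousOn
  have hfint : IntegrableOn
      (fun ρ => min 1 (ρ ^ (-β) / b) * Real.exp (t * ρ * Real.cos θ)) (Set.Ioi (1 / t)) := by
    refine hgint.mono' (hmeas.aestronglyMeasurable measurableSet_Ioi) ?_
    refine (ae_restrict_iff' measurableSet_Ioi).2 (ae_of_all _ fun ρ hρ => ?_)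
    have hρ0 : 0 < ρ := lt_trans h1t hρ
    have hf0 : 0 ≤ min 1 (ρ ^ (-β) / b) * Real.exp (t * ρ * Real.cos θ) := by positivity
    rw [Real.norm_eq_abs, abs_of_nonneg hf0]
    exact hpt ρ hρ
  -- integral bound on the ray
  have hray : (∫ ρ in Set.Ioi (1 / t), min 1 (ρ ^ (-β) / b) * Real.exp (t * ρ * Real.cos θ))
      ≤ m * (c * t)⁻¹ := by
    have h1 : (∫ ρ in Set.Ioi (1 / t), min 1 (ρ ^ (-β) / b) * Real.exp (t * ρ * Real.cos θ))
        ≤ ∫ ρ in Set.Ioi (1 / t), g ρ :=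
      setIntegral_mono_on hfint hgint measurableSet_Ioi hpt
    have h2 : (∫ ρ in Set.Ioi (1 / t), g ρ) = m * ((c * t)⁻¹ * Real.exp (-c)) := by
      rw [hgdef]
      rw [MeasureTheory.integral_const_mul]
      congr 1
      have h3 := integral_comp_mul_left_Ioi (fun x => Real.exp (-x)) (1 / t) hct
      simp only [smul_eq_mul] at h3
      have h4 : (fun x : ℝ => Real.exp (-(c * t) * x)) = fun x => Real.exp (-(c * t * x)) := by
        funext x; ring_nf
      rw [show c * t * (1 / t) = c by field_simp] at h3
      rw [h4]
      rw [h3, integral_exp_neg_Ioi]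
    have h5 : m * ((c * t)⁻¹ * Real.exp (-c)) ≤ m * (c * t)⁻¹ := by
      apply mul_le_mul_of_nonneg_left _ hm0
      calc (c * t)⁻¹ * Real.exp (-c) ≤ (c * t)⁻¹ * 1 := by
            apply mul_le_mul_of_nonneg_left _ (inv_pos.2 hct).le
            exact Real.exp_le_one_iff.2 (by linarith)
        _ = (c * t)⁻¹ := mul_one _
    linarith
  -- combine
  have hmain : t⁻¹ * m ≤ max 1 b⁻¹ * min t⁻¹ (t ^ (β - 1)) := by
    have htb : t⁻¹ * (t ^ β / b) = t ^ (β - 1) * b⁻¹ := by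
      rw [← Real.rpow_neg_one t, div_eq_mul_inv, ← mul_assoc, ← Real.rpow_add ht,
        show (-1 : ℝ) + β = β - 1 by ring]
    have hmax1 : (1:ℝ) ≤ max 1 b⁻¹ := le_max_left _ _
    have hmaxb : b⁻¹ ≤ max 1 b⁻¹ := le_max_right _ _
    have htinv : (0:ℝ) < t⁻¹ := by positivity
    have htb1 : (0:ℝ) < t ^ (β - 1) := Real.rpow_pos_of_pos ht _
    rcases le_total t⁻¹ (t ^ (β - 1)) with h | h
    · have : t⁻¹ * m ≤ t⁻¹ * 1 := mul_le_mul_of_nonneg_left (min_le_left _ _) htinv.le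
      rw [min_eq_left h]
      nlinarith
    · have : t⁻¹ * m ≤ t⁻¹ * (t ^ β / b) :=
        mul_le_mul_of_nonneg_left (min_le_right _ _) htinv.le
      rw [min_eq_right h]
      rw [htb] at this
      nlinarith
  have hKt : t⁻¹ * m * K ≤ (t⁻¹ * m) * K := le_of_eq (by ring)
  calc 2 * (∫ ρ in Set.Ioi (1 / t), min 1 (ρ ^ (-β) / b) * Real.exp (t * ρ * Real.cos θ))
        + t⁻¹ * m * K ≤ 2 * (m * (c * t)⁻¹) + t⁻¹ * m * K := by linarith
    _ = (2 / c + K) * (t⁻¹ * m) := by field_simp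
    _ ≤ (2 / c + K) * (max 1 b⁻¹ * min t⁻¹ (t ^ (β - 1))) := by
        apply mul_le_mul_of_nonneg_left hmain
        positivity
    _ = max 1 b⁻¹ * (2 / c + K) * min t⁻¹ (t ^ (β - 1)) := by ring
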